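/- For every a > 0 and every natural number d ≥ 0, the best uniform approximation error of g(x) = e^{a(x-1)} on [-1,1] by polynomials of degree at most d satisfies E_d(g) ≥ (π·e^{-a}/2) · (a/2)^{d+1} / (d+1)!. -/

import Mathlib

/-- The best uniform approximation error on `[-1, 1]` of `f` by real polynomials of degree
at most `d`. -/
noncomputable def bestApproxError (f : ℝ → ℝ) (d : ℕ) : ℝ :=
  ⨅ p : {p : Polynomial ℝ // p.natDegree ≤ d},
    ⨆ x : Set.Icc (-1:ℝ) 1, |f (x : ℝ) - (p : Polynomial ℝ).eval (x : ℝ)|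

/-!
Substituting `x = cos θ`, the `n`-th Chebyshev coefficient `∫₀^π f(cos θ) cos(nθ) dθ` of `f`
is unchanged when a polynomial of degree `< n` is subtracted from `f`, since
`cos^k θ` is a combination of `cos(jθ)` with `j ≤ k`. Bounding `|cos(nθ)|` in the integral then
gives `∫₀^π f(cos θ) cos((d+1)θ) dθ ≤ 2 E_d(f)`. For `f(x) = e^{a(x-1)}` the coefficient is
`e^{-a} ∑ₖ aᵏ/k! ∫₀^π cosᵏ θ cos(nθ) dθ`, a series of nonnegative terms whose `k = n` term
is `e^{-a} π (a/2)ⁿ / n!`.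
-/

open Real intervalIntegral Polynomial Nat

noncomputable def cosMoment (k n : ℕ) : ℝ := ∫ θ in (0:ℝ)..π, cos θ ^ k * cos (n * θ)

lemma continuous_cos_pow_mul_cos (k n : ℕ) :
    Continuous fun θ : ℝ => cos θ ^ k * cos (n * θ) := by
  fun_prop

lemma cosMoment_zero_zero : cosMoment 0 0 = π := by
  simp [cosMoment]

lemma cosMoment_zero_of_ne_zero {n : ℕ} (hn : n ≠ 0) : cosMoment 0 n = 0 := by
  have hn' : (n : ℝ) ≠ 0 := Nat.cast_ne_zero.mpr hn
  simp only [cosMoment, pow_zero, one_mul]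
  rw [integral_comp_mul_left (f := cos) hn']
  simp [sin_nat_mul_pi]

lemma cosMoment_succ_zero (k : ℕ) : cosMoment (k + 1) 0 = cosMoment k 1 := by
  simp [cosMoment, pow_succ]

lemma cosMoment_succ_succ (k m : ℕ) :
    cosMoment (k + 1) (m + 1) = (cosMoment k (m + 2) + cosMoment k m) / 2 := by
  have h (θ : ℝ) : cos θ ^ (k + 1) * cos ((m + 1 : ℕ) * θ) =
      (cos θ ^ k * cos ((m + 2 : ℕ) * θ) + cos θ ^ k * cos (m * θ)) / 2 := by
    have h₁ : ((m + 2 : ℕ) : ℝ) * θ = (m + 1 : ℕ) * θ + θ := by push_cast; ring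
    have h₂ : (m : ℝ) * θ = (m + 1 : ℕ) * θ - θ := by push_cast; ring
    rw [h₁, h₂, cos_add, cos_sub]
    ring
  unfold cosMoment
  simp_rw [h]
  rw [integral_div, integral_add ((continuous_cos_pow_mul_cos _ _).intervalIntegrable _ _)
    ((continuous_cos_pow_mul_cos _ _).intervalIntegrable _ _)]

lemma cosMoment_nonneg (k n : ℕ) : 0 ≤ cosMoment k n := by
  induction k generalizing n with
  | zero =>
    rcases n with _ | m
    · simpa [cosMoment_zero_zero] using pi_nonneg
    · rw [cosMoment_zero_of_ne_zero m.succ_ne_zero]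
  | succ k ih =>
    rcases n with _ | m
    · rw [cosMoment_succ_zero]
      exact ih 1
    · rw [cosMoment_succ_succ]
      have := ih (m + 2)
      have := ih m
      positivity

lemma cosMoment_eq_zero_of_lt {k n : ℕ} (h : k < n) : cosMoment k n = 0 := by
  induction k generalizing n with
  | zero => exact cosMoment_zero_of_ne_zero h.ne'
  | succ k ih =>
    rcases n with _ | m
    · omega
    · rw [cosMoment_succ_succ, ih (by omega), ih (by omega)]
      norm_num

lemma cosMoment_self (k : ℕ) : cosMoment k k = π / 2 ^ k := by
  induction k with
  | zero => simp [cosMoment_zero_zero]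
  | succ k ih =>
    rw [cosMoment_succ_succ, cosMoment_eq_zero_of_lt (by omega), ih, pow_succ]
    ring

lemma hasSum_integral_exp_mul_cos_mul_cos (a : ℝ) (n : ℕ) :
    HasSum (fun k => a ^ k / k ! * cosMoment k n)
      (∫ θ in (0:ℝ)..π, exp (a * cos θ) * cos (n * θ)) := by
  simp only [cosMoment, ← integral_const_mul]
  refine hasSum_integral_of_dominated_convergence (fun k _ => |a| ^ k / k !)
    (fun k => ((continuous_cos_pow_mul_cos k n).const_mul _).aestronglyMeasurable)
    (fun k => .of_forall fun θ _ => ?_) (.of_forall fun _ _ => ?_) intervalIntegrable_const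
    (.of_forall fun θ _ => ?_)
  · have hcos : |cos θ| ^ k * |cos (n * θ)| ≤ 1 :=
      mul_le_one₀ (pow_le_one₀ (abs_nonneg _) (abs_cos_le_one θ)) (abs_nonneg _)
        (abs_cos_le_one _)
    simp only [norm_mul, norm_div, norm_pow, Real.norm_eq_abs, Nat.abs_cast]
    exact mul_le_of_le_one_right (by positivity) hcos
  · exact NormedSpace.expSeries_div_summable |a|
  · have h := (NormedSpace.expSeries_div_hasSum_exp (a * cos θ)).mul_right (cos (n * θ))
    rw [← Real.exp_eq_exp_ℝ] at h
    have hterm : (fun k => a ^ k / k ! * (cos θ ^ k * cos (n * θ))) =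
        fun k => (a * cos θ) ^ k / k ! * cos (n * θ) := by
      ext k
      rw [mul_pow]
      ring
    rwa [hterm]

lemma pi_mul_div_le_integral_exp_mul_cos_mul_cos {a : ℝ} (ha : 0 ≤ a) (n : ℕ) :
    π * (a / 2) ^ n / n ! ≤ ∫ θ in (0:ℝ)..π, exp (a * cos θ) * cos (n * θ) := by
  calc π * (a / 2) ^ n / n ! = a ^ n / n ! * cosMoment n n := by
        rw [cosMoment_self, div_pow]
        ring
    _ ≤ _ := le_hasSum (hasSum_integral_exp_mul_cos_mul_cos a n) n fun k _ => by
        have := cosMoment_nonneg k n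
        positivity

lemma integral_eval_cos_mul_cos_eq_zero {p : ℝ[X]} {n : ℕ} (hp : p.natDegree < n) :
    ∫ θ in (0:ℝ)..π, p.eval (cos θ) * cos (n * θ) = 0 := by
  have h (θ : ℝ) : p.eval (cos θ) * cos (n * θ) =
      ∑ j ∈ Finset.range n, p.coeff j * (cos θ ^ j * cos (n * θ)) := by
    rw [eval_eq_sum_range' hp, Finset.sum_mul]
    congr 1 with j
    ring
  simp_rw [h]
  rw [integral_finsetSum fun j _ =>
    ((continuous_cos_pow_mul_cos j n).const_mul _).intervalIntegrable _ _]
  refine Finset.sum_eq_zero fun j hj => ?_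
  rw [integral_const_mul]
  exact mul_eq_zero_of_right _ (cosMoment_eq_zero_of_lt (Finset.mem_range.mp hj))

lemma periodic_abs_cos : Function.Periodic (fun x => |cos x|) π := fun x => by
  simp [cos_add_pi]

lemma integral_abs_cos : ∫ x in (0:ℝ)..π, |cos x| = 2 := by
  rw [← zero_add π, periodic_abs_cos.intervalIntegral_add_eq 0 (-(π / 2)),
    integral_congr (g := cos) fun x hx => abs_of_nonneg (cos_nonneg_of_mem_Icc ?_)]
  · simp
    norm_num
  · rw [Set.uIcc_of_le (by linarith [pi_pos])] at hx
    constructor <;> linarith [hx.1, hx.2]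

lemma integral_abs_cos_nat_mul {n : ℕ} (hn : n ≠ 0) :
    ∫ θ in (0:ℝ)..π, |cos (n * θ)| = 2 := by
  have hn' : (n : ℝ) ≠ 0 := Nat.cast_ne_zero.mpr hn
  have hperiods := periodic_abs_cos.intervalIntegral_add_zsmul_eq n 0
    fun _ _ => (continuous_abs.comp continuous_cos).intervalIntegrable _ _
  simp only [zero_add, zsmul_eq_mul, Int.cast_natCast, integral_abs_cos] at hperiods
  rw [integral_comp_mul_left (fun x => |cos x|) hn', mul_zero, hperiods, smul_eq_mul]
  field_simp

lemma integral_comp_cos_mul_cos_le {f : ℝ → ℝ} (hf : Continuous f) {p : ℝ[X]} {n : ℕ}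
    (hp : p.natDegree < n) {M : ℝ} (hM : ∀ x ∈ Set.Icc (-1 : ℝ) 1, |f x - p.eval x| ≤ M) :
    ∫ θ in (0:ℝ)..π, f (cos θ) * cos (n * θ) ≤ 2 * M := by
  have hcos : Continuous fun θ : ℝ => cos (n * θ) := by fun_prop
  calc ∫ θ in (0:ℝ)..π, f (cos θ) * cos (n * θ)
      = ∫ θ in (0:ℝ)..π, (f (cos θ) - p.eval (cos θ)) * cos (n * θ) := by
        simp_rw [sub_mul]
        rw [integral_sub
          ((by fun_prop : Continuous fun θ => f (cos θ) * cos (n * θ)).intervalIntegrable _ _)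
          ((by fun_prop : Continuous fun θ => p.eval (cos θ) * cos (n * θ)).intervalIntegrable _ _),
          integral_eval_cos_mul_cos_eq_zero hp, sub_zero]
    _ ≤ ∫ θ in (0:ℝ)..π, M * |cos (n * θ)| := by
        refine integral_mono_on pi_nonneg
          ((((hf.comp continuous_cos).sub (p.continuous.comp continuous_cos)).mul
            hcos).intervalIntegrable _ _)
          ((continuous_const.mul hcos.abs).intervalIntegrable _ _) fun θ _ => ?_
        calc (f (cos θ) - p.eval (cos θ)) * cos (n * θ)
            ≤ |f (cos θ) - p.eval (cos θ)| * |cos (n * θ)| := by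
              rw [← abs_mul]
              exact le_abs_self _
          _ ≤ M * |cos (n * θ)| := by
              gcongr
              exact hM _ ⟨neg_one_le_cos θ, cos_le_one θ⟩
    _ = 2 * M := by
        rw [integral_const_mul, integral_abs_cos_nat_mul (by omega)]
        ring

lemma abs_sub_eval_le_iSup {f : ℝ → ℝ} (hf : Continuous f) (p : ℝ[X]) {x : ℝ}
    (hx : x ∈ Set.Icc (-1 : ℝ) 1) :
    |f x - p.eval x| ≤ ⨆ y : Set.Icc (-1 : ℝ) 1, |f (y : ℝ) - p.eval (y : ℝ)| :=
  le_ciSup (isCompact_range (by fun_prop :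
    Continuous fun y : Set.Icc (-1 : ℝ) 1 => |f y - p.eval (y : ℝ)|)).bddAbove ⟨x, hx⟩

lemma integral_comp_cos_mul_cos_div_two_le_bestApproxError {f : ℝ → ℝ} (hf : Continuous f)
    (d : ℕ) : (∫ θ in (0:ℝ)..π, f (cos θ) * cos ((d + 1 : ℕ) * θ)) / 2 ≤ bestApproxError f d := by
  have : Nonempty {p : ℝ[X] // p.natDegree ≤ d} := ⟨⟨0, by simp⟩⟩
  refine le_ciInf fun ⟨p, hp⟩ => ?_
  rw [div_le_iff₀' two_pos]
  exact integral_comp_cos_mul_cos_le hf (Nat.lt_succ_of_le hp) fun x hx =>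
    abs_sub_eval_le_iSup hf p hx

/-- Chebyshev-coefficient lower bound for approximating `g(x) = exp (a*(x-1))` on `[-1,1]`:
`E_d(g) ≥ (π e^{-a} / 2) · (a/2)^{d+1} / (d+1)!`. -/
theorem stmt3 (a : ℝ) (ha : 0 < a) (d : ℕ) :
    Real.pi * Real.exp (-a) / 2 * ((a / 2) ^ (d + 1) / ((d + 1).factorial : ℝ)) ≤
      bestApproxError (fun x => Real.exp (a * (x - 1))) d := by
  have hshift (θ : ℝ) : exp (a * (cos θ - 1)) * cos ((d + 1 : ℕ) * θ) =
      exp (-a) * (exp (a * cos θ) * cos ((d + 1 : ℕ) * θ)) := by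
    rw [show a * (cos θ - 1) = -a + a * cos θ by ring, exp_add, mul_assoc]
  have hcoeff := integral_comp_cos_mul_cos_div_two_le_bestApproxError
    (f := fun x => exp (a * (x - 1))) (by fun_prop) d
  simp only [hshift, integral_const_mul] at hcoeff
  calc π * exp (-a) / 2 * ((a / 2) ^ (d + 1) / (d + 1)!)
      = exp (-a) * (π * (a / 2) ^ (d + 1) / (d + 1)!) / 2 := by ring
    _ ≤ exp (-a) * (∫ θ in (0:ℝ)..π, exp (a * cos θ) * cos ((d + 1 : ℕ) * θ)) / 2 := by
        gcongr
        exact pi_mul_div_le_integral_exp_mul_cos_mul_cos ha.le (d + 1)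
    _ ≤ _ := hcoeff
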